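/- arXiv:1602.03394 — 3 statements merged into one kernel-verified Lean document; each statement's English description precedes it below -/
import Mathlib

section
/- Let G be a finite metric graph and let λ > 0. Assume that the subgraph G_λ is connected and contains no cycle whose length is an odd integer multiple of π/√λ. Then dim R(G, λ) = β₁(G_λ). -/
open Real Set Filter Topology

noncomputable section

/-- A finite metric graph: finite vertex and edge sets, each edge `e` has an initial
vertex `o e`, a terminal vertex `t e` and a positive length `L e`, and is identified
with the interval `[0, L e]`.  Every vertex is an endpoint of some edge. -/
structure MetricGraph where
  V : Type
  E : Type
  [fintV : Fintype V]
  [fintE : Fintype E]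
  [decV : DecidableEq V]
  [decE : DecidableEq E]
  o : E → V
  t : E → V
  L : E → ℝ
  L_pos : ∀ e, 0 < L e
  noIsolated : ∀ v, ∃ e, o e = v ∨ t e = v

attribute [instance] MetricGraph.fintV MetricGraph.fintE MetricGraph.decV MetricGraph.decE

namespace MetricGraph

variable (G : MetricGraph)

/-- The source vertex of edge `e` traversed in direction `d`. -/
def esrc (e : G.E) (d : Bool) : G.V := if d then G.o e else G.t e

/-- The destination vertex of edge `e` traversed in direction `d`. -/
def edst (e : G.E) (d : Bool) : G.V := if d then G.t e else G.o e

/-- A cycle in a metric graph: a closed walk which uses no edge twice and repeats no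
vertex except that its initial and terminal vertices coincide. -/
structure Cycle where
  n : ℕ
  npos : 0 < n
  edge : Fin n → G.E
  dir : Fin n → Bool
  edge_inj : Function.Injective edge
  vert_inj : Function.Injective fun i => G.esrc (edge i) (dir i)
  chain : ∀ i : Fin n,
    G.edst (edge i) (dir i) =
      G.esrc (edge ⟨((i : ℕ) + 1) % n, Nat.mod_lt _ npos⟩)
        (dir ⟨((i : ℕ) + 1) % n, Nat.mod_lt _ npos⟩)

/-- The length of a cycle: the sum of the lengths of its edges. -/
def Cycle.length {G : MetricGraph} (c : G.Cycle) : ℝ := ∑ i, G.L (c.edge i)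

/-- The cycle `c` lies in the subgraph given by the edge set `S`. -/
def Cycle.inSub {G : MetricGraph} (c : G.Cycle) (S : Set G.E) : Prop := ∀ i, c.edge i ∈ S

/-- The cycle `c` has odd length with respect to `x`: its length is an odd multiple of `x`. -/
def Cycle.oddLength {G : MetricGraph} (c : G.Cycle) (x : ℝ) : Prop :=
  ∃ m : ℕ, Odd m ∧ c.length = m * x

/-- The initial vertex of a cycle. -/
def Cycle.start {G : MetricGraph} (c : G.Cycle) : G.V :=
  G.esrc (c.edge ⟨0, c.npos⟩) (c.dir ⟨0, c.npos⟩)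

/-- The vertices incident to an edge of the edge set `S`, i.e. the vertex set of the
subgraph generated by `S`. -/
def incVerts (S : Set G.E) : Set G.V := {v | ∃ e ∈ S, G.o e = v ∨ G.t e = v}

/-- Two vertices are related iff they are connected through edges of `S`. -/
def connRel (S : Set G.E) : G.V → G.V → Prop :=
  Relation.EqvGen fun v w => ∃ e ∈ S, G.o e = v ∧ G.t e = w

/-- The connected component of the vertex `v` in the subgraph given by `S`. -/
def component (S : Set G.E) (v : G.V) : Set G.V := {w | G.connRel S v w}

/-- The number of connected components of the subgraph given by the edge set `S`. -/
def beta0 (S : Set G.E) : ℕ := (G.component S '' G.incVerts S).ncard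

/-- The first Betti number `|E| - |V| + β₀` of the subgraph given by the edge set `S`. -/
def beta1 (S : Set G.E) : ℤ :=
  (S.ncard : ℤ) - ((G.incVerts S).ncard : ℤ) + (G.beta0 S : ℤ)

/-- The number of connected components of the subgraph given by `S` which contain a
cycle of odd length with respect to `x`. -/
def beta0odd (S : Set G.E) (x : ℝ) : ℕ :=
  (G.component S '' {v | v ∈ G.incVerts S ∧
    ∃ c : G.Cycle, c.inSub S ∧ c.oddLength x ∧ G.connRel S v c.start}).ncard

/-- The edge set of the subgraph `G_λ`: all edges whose length is a positive integer
multiple of `π / √λ`. -/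
def lamEdges (lam : ℝ) : Set G.E :=
  {e | ∃ k : ℕ, 0 < k ∧ G.L e = k * (π / Real.sqrt lam)}

/-- An edgewise given function is continuous at all the vertices of `G`. -/
def ContVert (f : G.E → ℝ → ℂ) : Prop :=
  (∀ e₁ e₂, G.o e₁ = G.o e₂ → f e₁ 0 = f e₂ 0) ∧
  (∀ e₁ e₂, G.o e₁ = G.t e₂ → f e₁ 0 = f e₂ (G.L e₂)) ∧
  (∀ e₁ e₂, G.t e₁ = G.t e₂ → f e₁ (G.L e₁) = f e₂ (G.L e₂))

/-- The value of an (edgewise given, vertex-continuous) function at the vertex `v`. -/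
def vtxVal (f : G.E → ℝ → ℂ) (v : G.V) : ℂ :=
  if h : ∃ e, G.o e = v then f h.choose 0
  else f (G.noIsolated v).choose (G.L ((G.noIsolated v).choose))

/-- `∂_ν f (v)`: the sum of the derivatives at the vertex `v` of the restrictions of
`f` to the edges incident to `v`, all pointing towards `v`. -/
def normDer (f : G.E → ℝ → ℂ) (v : G.V) : ℂ :=
  (∑ e ∈ Finset.univ.filter fun e => G.t e = v, deriv (f e) (G.L e)) -
    ∑ e ∈ Finset.univ.filter fun e => G.o e = v, deriv (f e) 0

/-- `f` solves `-f'' = μ f` on every edge and is continuous at the vertices.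
(A solution of `-f'' = μ f` on `[0, L e]` is identified with its unique extension to a
global solution on `ℝ`.) -/
def IsSol (mu : ℂ) (f : G.E → ℝ → ℂ) : Prop :=
  (∀ e, ContDiff ℝ 2 (f e)) ∧
  (∀ e, ∀ x : ℝ, deriv (deriv (f e)) x = -mu * f e x) ∧ G.ContVert f

/-- Membership in `ker (-Δ_G - λ)` for the Kirchhoff Laplacian `-Δ_G`. -/
def InKer (lam : ℝ) (f : G.E → ℝ → ℂ) : Prop :=
  G.IsSol (lam : ℂ) f ∧ ∀ v, G.normDer f v = 0

/-- `ker (-Δ_G - λ)` as a set of (edgewise given) functions. -/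
def kerSet (lam : ℝ) : Set (G.E → ℝ → ℂ) := {f | G.InKer lam f}

/-- `λ` is an eigenvalue of the Kirchhoff Laplacian `-Δ_G`. -/
def IsEigenvalue (lam : ℝ) : Prop := G.kerSet lam ≠ {0}

/-- `dim ker (-Δ_G - λ)`. -/
def dimKer (lam : ℝ) : ℕ := Module.finrank ℂ (Submodule.span ℂ (G.kerSet lam))

/-- The resonance eigenspace `R (G, λ)`: all elements of `ker (-Δ_G - λ)` vanishing at
every vertex of `G`. -/
def resSet (lam : ℝ) : Set (G.E → ℝ → ℂ) :=
  {f | G.InKer lam f ∧ ∀ e, f e 0 = 0 ∧ f e (G.L e) = 0}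

/-- `λ` is a (real) resonance of `G` iff `R (G, λ) ≠ {0}`. -/
def IsResonance (lam : ℝ) : Prop := G.resSet lam ≠ {0}

/-- `dim R (G, λ)`. -/
def dimRes (lam : ℝ) : ℕ := Module.finrank ℂ (Submodule.span ℂ (G.resSet lam))

/-- `R_B (G, λ)`: all elements of `ker (-Δ_G - λ)` vanishing at every vertex in `B`. -/
def resSetB (B : Set G.V) (lam : ℝ) : Set (G.E → ℝ → ℂ) :=
  {f | G.InKer lam f ∧ ∀ e, (G.o e ∈ B → f e 0 = 0) ∧ (G.t e ∈ B → f e (G.L e) = 0)}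

/-- `dim R_B (G, λ)`. -/
def dimResB (B : Set G.V) (lam : ℝ) : ℕ :=
  Module.finrank ℂ (Submodule.span ℂ (G.resSetB B lam))

/-- The degree of a vertex (a loop counts twice). -/
def degree (v : G.V) : ℕ := {e | G.o e = v}.ncard + {e | G.t e = v}.ncard

/-- The degree of a vertex inside the subgraph given by the edge set `S`. -/
def degreeIn (S : Set G.E) (v : G.V) : ℕ :=
  {e | e ∈ S ∧ G.o e = v}.ncard + {e | e ∈ S ∧ G.t e = v}.ncard

/-- The edge set of the core of `G`: the largest subgraph without vertices of degree one. -/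
def coreEdges : Set G.E := ⋃₀ {S : Set G.E | ∀ v, G.degreeIn S v ≠ 1}

/-- A boundary vertex is a vertex of degree one. -/
def IsBoundaryVertex (v : G.V) : Prop := G.degree v = 1

/-- A proper core vertex: all edges attached to it belong to the core of `G`. -/
def IsProperCoreVertex (v : G.V) : Prop :=
  ∀ e, G.o e = v ∨ G.t e = v → e ∈ G.coreEdges

/-- The defining property of the function `f^{(l)}` for the Titchmarsh--Weyl matrix:
`f` solves `-f'' = μ f` edgewise, is continuous at the vertices, and satisfies
`∂_ν f (v₀) = 1` and `∂_ν f (v) = 0` for all vertices `v ≠ v₀`. -/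
def IsTWsol (mu : ℂ) (v0 : G.V) (f : G.E → ℝ → ℂ) : Prop :=
  G.IsSol mu f ∧ G.normDer f v0 = 1 ∧ ∀ v, v ≠ v0 → G.normDer f v = 0

open scoped Classical in
/-- The Titchmarsh--Weyl matrix `M_B (μ)` with entries `(M_B (μ))_{k,l} = f^{(l)} (v_k)`
(defined via choice; junk if no `f^{(l)}` exists, i.e. at the eigenvalues). -/
def TW (B : Finset G.V) (mu : ℂ) : Matrix B B ℂ :=
  Matrix.of fun k l : B => if h : ∃ f, G.IsTWsol mu l f then G.vtxVal h.choose k else 0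

/-- The cycle `c` has commensurate edges: all ratios of edge lengths are rational. -/
def Commensurate (c : G.Cycle) : Prop :=
  ∀ i j, ∃ q : ℚ, G.L (c.edge i) = q * G.L (c.edge j)

/-- `u_C`: the maximal number such that the length of each edge of the cycle `c` is a
positive integer multiple of it. -/
def uC (c : G.Cycle) : ℝ :=
  sSup {u : ℝ | 0 < u ∧ ∀ i, ∃ k : ℕ, 0 < k ∧ G.L (c.edge i) = k * u}

/-- `λ_G := inf { π²/u_C² : C a cycle in G with commensurate edges }`, with value `+∞`
if there is no cycle with commensurate edges. -/
def lamThreshold : EReal :=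
  sInf {x : EReal | ∃ c : G.Cycle, G.Commensurate c ∧ x = ((π ^ 2 / (G.uC c) ^ 2 : ℝ) : EReal)}

end MetricGraph

section MatrixFun

variable {m : Type} [Fintype m]

/-- The matrix function `M` has a pole of order `n` at `λ`:
`lim_{z → λ} (z - λ)^n M(z)` exists and is nonzero, while
`lim_{z → λ} (z - λ)^(n+1) M(z) = 0`. -/
def hasPoleOrder (M : ℂ → Matrix m m ℂ) (lam : ℂ) (n : ℕ) : Prop :=
  (∃ A : Matrix m m ℂ, A ≠ 0 ∧
    Filter.Tendsto (fun z => (z - lam) ^ n • M z) (𝓝[≠] lam) (𝓝 A)) ∧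
  Filter.Tendsto (fun z => (z - lam) ^ (n + 1) • M z) (𝓝[≠] lam) (𝓝 0)

/-- `λ` is a pole of the matrix function `M`: `M` is analytic on a punctured
neighborhood of `λ` and has a pole of some order `n ≥ 1` at `λ`. -/
def isPole (M : ℂ → Matrix m m ℂ) (lam : ℂ) : Prop :=
  (∀ᶠ z in 𝓝[≠] lam, ∀ k l, AnalyticAt ℂ (fun w => M w k l) z) ∧
  ∃ n : ℕ, 1 ≤ n ∧ hasPoleOrder M lam n

open scoped Classical in
/-- `Res_λ M := (2πi)⁻¹ ∮_Γ M(μ) dμ`, computed entrywise over a sufficiently small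
positively oriented circle `Γ` centered at `λ` (defined via choice as the common value
of the circle integrals over all sufficiently small radii). -/
def matResidue (M : ℂ → Matrix m m ℂ) (lam : ℂ) : Matrix m m ℂ :=
  Matrix.of fun k l =>
    if h : ∃ c : ℂ, ∀ᶠ R in 𝓝[>] (0 : ℝ),
        (2 * (π : ℂ) * Complex.I)⁻¹ * circleIntegral (fun z => M z k l) lam R = c
    then h.choose else 0

end MatrixFun

/-!
On each edge a resonance eigenfunction solves `-f'' = λ f` and vanishes at both ends, so
`f_e(x) = b_e sin(√λ x)`, with `b_e = 0` unless `L_e = k_e π / √λ`, i.e. `e ∈ G_λ`. Kirchhoff's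
condition becomes `∑_{t e = v} (-1)^{k_e} b_e = ∑_{o e = v} b_e`. Without odd cycles every closed
walk in `G_λ` has even `k`-length, so `(-1)^{k_e} = (-1)^{p(o e) + p(t e)}` for a potential `p`, and
`b_e ↦ (-1)^{p(o e)} b_e` turns the condition into conservation of flow. The flows on the connected
graph `G_λ` form its cycle space, of dimension `|E| - |V| + 1 = β₁(G_λ)`.
-/

open Module

theorem List.Nodup.eq_of_map_getElem_eq {α β : Type*} {f : α → β} {l : List α}
    (h : (l.map f).Nodup) {i j : ℕ} (hi : i < l.length) (hj : j < l.length)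
    (hij : f l[i] = f l[j]) : i = j :=
  (h.of_map f).getElem_inj_iff.mp
    (List.inj_on_of_nodup_map h (List.getElem_mem hi) (List.getElem_mem hj) hij)

theorem List.exists_eq_append_cons_append_cons_of_not_nodup_map {α β : Type*} {f : α → β}
    {l : List α} (h : ¬(l.map f).Nodup) :
    ∃ l₁ a l₂ b l₃, l = l₁ ++ a :: (l₂ ++ b :: l₃) ∧ f a = f b := by
  simp only [List.nodup_iff_sublist, not_forall, not_not, List.sublist_map_iff] at h
  obtain ⟨y, l', hsub, hmap⟩ := h
  rcases l' with _ | ⟨a, _ | ⟨b, _ | _⟩⟩ <;> simp only [List.map_cons, List.map_nil,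
    List.cons.injEq, reduceCtorEq, and_false, and_true] at hmap
  obtain ⟨r₁, r₂, rfl, ha, hb⟩ := List.cons_sublist_iff.mp hsub
  obtain ⟨s, t, rfl⟩ := List.append_of_mem ha
  obtain ⟨s', t', rfl⟩ := List.append_of_mem (List.singleton_sublist.mp hb)
  exact ⟨s, a, t ++ s', b, t', by simp, hmap.1.symm.trans hmap.2⟩

theorem hasDerivAt_sin_mul_ofReal (ω : ℂ) (x : ℝ) :
    HasDerivAt (fun y : ℝ => Complex.sin (ω * y)) (ω * Complex.cos (ω * x)) x := by
  simpa [mul_comm] using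
    ((Complex.hasDerivAt_sin _).comp _ ((hasDerivAt_id (x : ℂ)).const_mul ω)).comp_ofReal

theorem hasDerivAt_cos_mul_ofReal (ω : ℂ) (x : ℝ) :
    HasDerivAt (fun y : ℝ => Complex.cos (ω * y)) (-(ω * Complex.sin (ω * x))) x := by
  simpa [mul_comm] using
    ((Complex.hasDerivAt_cos _).comp _ ((hasDerivAt_id (x : ℂ)).const_mul ω)).comp_ofReal

theorem eq_cos_add_sin_of_hasDerivAt {ω : ℂ} (hω : ω ≠ 0) {f f' : ℝ → ℂ}
    (hf : ∀ x, HasDerivAt f (f' x) x) (hf' : ∀ x, HasDerivAt f' (-ω ^ 2 * f x) x) (x : ℝ) :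
    f x = f 0 * Complex.cos (ω * x) + f' 0 / ω * Complex.sin (ω * x) := by
  have hconst : ∀ {g : ℝ → ℂ}, (∀ y, HasDerivAt g 0 y) → g x = g 0 := fun hg =>
    is_const_of_deriv_eq_zero (fun y => (hg y).differentiableAt) (fun y => (hg y).deriv) x 0
  have hA := hconst (g := fun y => f y * Complex.cos (ω * y) - f' y / ω * Complex.sin (ω * y))
    fun y => (((hf y).mul (hasDerivAt_cos_mul_ofReal ω y)).sub
      (((hf' y).div_const ω).mul (hasDerivAt_sin_mul_ofReal ω y))).congr_deriv
        (by field_simp; ring)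
  have hB := hconst (g := fun y => f y * Complex.sin (ω * y) + f' y / ω * Complex.cos (ω * y))
    fun y => (((hf y).mul (hasDerivAt_sin_mul_ofReal ω y)).add
      (((hf' y).div_const ω).mul (hasDerivAt_cos_mul_ofReal ω y))).congr_deriv
        (by field_simp; ring)
  simp only [Complex.ofReal_zero, mul_zero, Complex.cos_zero, Complex.sin_zero, mul_one,
    sub_zero, zero_add] at hA hB
  linear_combination (-f x) * Complex.cos_sq_add_sin_sq (ω * x) + Complex.cos (ω * x) * hA
    + Complex.sin (ω * x) * hB

namespace MetricGraph

variable {G : MetricGraph} {S : Set G.E}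

structure Dart (G : MetricGraph) where
  edge : G.E
  dir : Bool

namespace Dart

def src (s : G.Dart) : G.V := G.esrc s.edge s.dir

def dst (s : G.Dart) : G.V := G.edst s.edge s.dir

def rev (s : G.Dart) : G.Dart := ⟨s.edge, !s.dir⟩

@[simp] theorem edge_rev (s : G.Dart) : s.rev.edge = s.edge := rfl

@[simp] theorem src_rev (s : G.Dart) : s.rev.src = s.dst := by
  cases s with | mk e d => cases d <;> rfl

@[simp] theorem dst_rev (s : G.Dart) : s.rev.dst = s.src := by
  cases s with | mk e d => cases d <;> rfl

theorem eq_rev_of_edge_eq {s s' : G.Dart} (h : s.edge = s'.edge) (hd : s.dir ≠ s'.dir) :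
    s' = s.rev := by
  cases s; cases s'
  simp only [rev, Dart.mk.injEq] at h hd ⊢
  exact ⟨h.symm, by cases ‹Bool› <;> simp_all⟩

end Dart

def IsWalk (S : Set G.E) : G.V → List G.Dart → G.V → Prop
  | v, [], w => v = w
  | v, s :: l, w => s.edge ∈ S ∧ s.src = v ∧ IsWalk S s.dst l w

@[simp] theorem isWalk_nil {v w : G.V} : IsWalk S v [] w ↔ v = w := Iff.rfl

@[simp] theorem isWalk_cons {v w : G.V} {s : G.Dart} {l : List G.Dart} :
    IsWalk S v (s :: l) w ↔ s.edge ∈ S ∧ s.src = v ∧ IsWalk S s.dst l w := Iff.rfl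

theorem isWalk_append {v w : G.V} {l₁ l₂ : List G.Dart} :
    IsWalk S v (l₁ ++ l₂) w ↔ ∃ u, IsWalk S v l₁ u ∧ IsWalk S u l₂ w := by
  induction l₁ generalizing v with
  | nil => simp
  | cons s l ih => simp [ih, and_assoc]

theorem IsWalk.reverse {v w : G.V} {l : List G.Dart} (h : IsWalk S v l w) :
    IsWalk S w (l.reverse.map Dart.rev) v := by
  induction l generalizing v with
  | nil => exact h.symm
  | cons s l ih =>
    obtain ⟨hs, rfl, hl⟩ := h
    rw [List.reverse_cons, List.map_append]
    exact isWalk_append.mpr ⟨_, ih hl, by simp [hs]⟩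

theorem IsWalk.mem {v w : G.V} {l : List G.Dart} (h : IsWalk S v l w) :
    ∀ s ∈ l, s.edge ∈ S := by
  induction l generalizing v with
  | nil => simp
  | cons s l ih => simpa [h.1] using ih h.2.2

theorem exists_isWalk_of_connRel {v w : G.V} (h : G.connRel S v w) : ∃ l, IsWalk S v l w := by
  induction h with
  | rel a b hab =>
    obtain ⟨e, he, rfl, rfl⟩ := hab
    exact ⟨[⟨e, true⟩], by simp [Dart.src, Dart.dst, esrc, edst, he]⟩
  | refl a => exact ⟨[], rfl⟩
  | symm a b _ ih =>
    obtain ⟨l, hl⟩ := ih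
    exact ⟨_, hl.reverse⟩
  | trans a b c _ _ ih₁ ih₂ =>
    obtain ⟨l₁, h₁⟩ := ih₁
    obtain ⟨l₂, h₂⟩ := ih₂
    exact ⟨l₁ ++ l₂, isWalk_append.mpr ⟨b, h₁, h₂⟩⟩

theorem IsWalk.getElem_dst {v w : G.V} {l : List G.Dart} (h : IsWalk S v l w) (i : ℕ)
    (hi : i < l.length) :
    l[i].dst = if hi' : i + 1 < l.length then l[i + 1].src else w := by
  induction l generalizing v i with
  | nil => simp at hi
  | cons s l ih =>
    cases i with
    | zero =>
      cases l with
      | nil => simpa using h.2.2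
      | cons s' l => simpa using h.2.2.2.1.symm
    | succ i => simpa using ih h.2.2 i (by simpa using hi)

theorem IsWalk.getElem_dst_of_closed {v : G.V} {l : List G.Dart} (h : IsWalk S v l v) (i : ℕ)
    (hi : i < l.length) :
    l[i].dst = (l[(i + 1) % l.length]'(Nat.mod_lt _ (Nat.zero_lt_of_lt hi))).src := by
  rw [h.getElem_dst i hi]
  split_ifs with hlt
  · simp [Nat.mod_eq_of_lt hlt]
  · cases l with
    | nil => simp at hi
    | cons s l =>
      have hmod : (i + 1) % (l.length + 1) = 0 := by
        rw [show i + 1 = l.length + 1 by simp at hi hlt; omega, Nat.mod_self]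
      simpa [hmod] using h.2.1.symm

theorem IsWalk.nodup_edge {v : G.V} {l : List G.Dart} {k : G.E → ℕ} (h : IsWalk S v l v)
    (hsrc : (l.map Dart.src).Nodup) (hodd : Odd (l.map fun s => k s.edge).sum) :
    (l.map Dart.edge).Nodup := by
  rw [List.nodup_iff_injective_getElem]
  rintro ⟨i, hi⟩ ⟨j, hj⟩ hij
  simp only [List.length_map, List.getElem_map] at hi hj hij
  refine Fin.ext (show i = j from by_contra fun hne => ?_)
  by_cases hd : l[i].dir = l[j].dir
  · exact hne (hsrc.eq_of_map_getElem_eq hi hj (by simp only [Dart.src, hij, hd]))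
  -- traversing an edge back and forth forces the closed walk to have length two
  have hrev := Dart.eq_rev_of_edge_eq hij hd
  have hji := hsrc.eq_of_map_getElem_eq hj (Nat.mod_lt _ (Nat.zero_lt_of_lt hi))
    (by rw [← h.getElem_dst_of_closed i hi, hrev, Dart.src_rev])
  have hij' := hsrc.eq_of_map_getElem_eq hi (Nat.mod_lt _ (Nat.zero_lt_of_lt hj))
    (by rw [← h.getElem_dst_of_closed j hj, hrev, Dart.dst_rev])
  have hnext : ∀ m < l.length, (m + 1) % l.length = if m + 1 < l.length then m + 1 else 0 :=
    fun m hm => by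
      split_ifs with hlt
      · exact Nat.mod_eq_of_lt hlt
      · rw [show m + 1 = l.length by omega, Nat.mod_self]
  rw [hnext i hi] at hji
  rw [hnext j hj] at hij'
  have hlen : l.length = 2 := by split_ifs at hji hij' <;> omega
  obtain ⟨a, b, rfl⟩ := List.length_eq_two.mp hlen
  have hab : a.edge = b.edge := by
    rcases (by simp at hi hj; omega : i = 0 ∧ j = 1 ∨ i = 1 ∧ j = 0) with ⟨rfl, rfl⟩ | ⟨rfl, rfl⟩
    exacts [hij, hij.symm]
  simp only [List.map_cons, List.map_nil, List.sum_cons, List.sum_nil, add_zero, hab] at hodd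
  exact Nat.not_odd_iff_even.mpr (Even.add_self _) hodd

theorem exists_cycle_of_isWalk {v : G.V} {l : List G.Dart} (h : IsWalk S v l v) (hl : l ≠ [])
    (hsrc : (l.map Dart.src).Nodup) (hedge : (l.map Dart.edge).Nodup) :
    ∃ c : G.Cycle, c.inSub S ∧ c.length = (l.map fun s => G.L s.edge).sum :=
  ⟨{ n := l.length
     npos := List.length_pos_of_ne_nil hl
     edge := fun i => l[i].edge
     dir := fun i => l[i].dir
     edge_inj := fun i j hij => Fin.ext (hedge.eq_of_map_getElem_eq i.2 j.2 hij)
     vert_inj := fun i j hij => Fin.ext (hsrc.eq_of_map_getElem_eq i.2 j.2 hij)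
     chain := fun i => h.getElem_dst_of_closed i i.2 },
    fun i => h.mem _ (List.getElem_mem _),
    by rw [Cycle.length, ← List.ofFn_getElem_eq_map, List.sum_ofFn]; rfl⟩

theorem exists_cycle_oddLength_of_isWalk {x : ℝ} {k : G.E → ℕ} (hk : ∀ e ∈ S, G.L e = k e * x)
    {v : G.V} {l : List G.Dart} (h : IsWalk S v l v) (hodd : Odd (l.map fun s => k s.edge).sum) :
    ∃ c : G.Cycle, c.inSub S ∧ c.oddLength x := by
  induction hn : l.length using Nat.strong_induction_on generalizing v l with
  | _ n ih =>
  by_cases hsrc : (l.map Dart.src).Nodup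
  · have hl : l ≠ [] := by rintro rfl; simp at hodd
    obtain ⟨c, hcS, hcL⟩ := exists_cycle_of_isWalk h hl hsrc (h.nodup_edge hsrc hodd)
    refine ⟨c, hcS, _, hodd, ?_⟩
    rw [hcL, List.map_congr_left fun s hs => hk s.edge (h.mem s hs), List.sum_map_mul_right,
      Nat.cast_list_sum, List.map_map]
    rfl
  -- a repeated vertex splits the walk into two shorter closed walks, one of them odd
  obtain ⟨l₁, a, l₂, b, l₃, rfl, hab⟩ :=
    List.exists_eq_append_cons_append_cons_of_not_nodup_map hsrc
  simp only [isWalk_append, isWalk_cons] at h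
  obtain ⟨u, h₁, ha, rfl, u', h₂, hb, rfl, h₃⟩ := h
  have hinner : IsWalk S a.src (a :: l₂) a.src := ⟨ha, rfl, hab ▸ h₂⟩
  have houter : IsWalk S v (l₁ ++ b :: l₃) v := isWalk_append.mpr ⟨_, h₁, hb, hab.symm, h₃⟩
  simp only [List.length_append, List.length_cons] at hn
  simp only [List.map_append, List.map_cons, List.sum_append, List.sum_cons, Nat.odd_iff] at hodd
  by_cases hin : Odd ((a :: l₂).map fun s => k s.edge).sum
  · exact ih _ (by simp; omega) hinner hin rfl
  · refine ih _ (by simp; omega) houter ?_ rfl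
    simp only [List.map_append, List.map_cons, List.sum_append, List.sum_cons, Nat.odd_iff]
      at hin ⊢
    omega

theorem exists_even_potential {x : ℝ} {k : G.E → ℕ} (hk : ∀ e ∈ S, G.L e = k e * x)
    (hno : ¬∃ c : G.Cycle, c.inSub S ∧ c.oddLength x) :
    ∃ p : G.V → ℕ, ∀ e ∈ S, Even (p (G.o e) + k e + p (G.t e)) := by
  let R : G.V → G.V → Prop := fun v w => ∃ e ∈ S, G.o e = v ∧ G.t e = w
  -- `p v` is the `k`-length of a walk to `v` from a fixed vertex of its component
  have hwalk : ∀ v, ∃ l, IsWalk S (Quot.mk R v).out l v := fun v =>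
    exists_isWalk_of_connRel (Quot.eqvGen_exact (Quot.out_eq _))
  choose w hw using hwalk
  refine ⟨fun v => ((w v).map fun s => k s.edge).sum, fun e he => ?_⟩
  have hrep : (Quot.mk R (G.o e)).out = (Quot.mk R (G.t e)).out := by
    rw [Quot.sound ⟨e, he, rfl, rfl⟩]
  have hclosed : IsWalk S (Quot.mk R (G.o e)).out
      (w (G.o e) ++ ⟨e, true⟩ :: (w (G.t e)).reverse.map Dart.rev) (Quot.mk R (G.o e)).out :=
    isWalk_append.mpr ⟨_, hw _, he, rfl, by rw [hrep]; exact (hw _).reverse⟩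
  by_contra hev
  refine hno (exists_cycle_oddLength_of_isWalk hk hclosed ?_)
  simpa [List.map_reverse, Function.comp_def, add_assoc] using Nat.not_even_iff_odd.mp hev

/-- For `f_e(x) = b_e sin(ω x)` with `b` supported on `S`, `∂_ν f = 0` is the condition below with
`σ e = cos (ω L e)`; `σ = 1` gives the flows on `S`. -/
def kirchhoffSpace (G : MetricGraph) (S : Set G.E) (σ : G.E → ℂ) : Submodule ℂ (G.E → ℂ) where
  carrier := {b | (∀ e ∉ S, b e = 0) ∧ ∀ v,
    ∑ e ∈ Finset.univ.filter (fun e => G.t e = v), σ e * b e =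
      ∑ e ∈ Finset.univ.filter (fun e => G.o e = v), b e}
  zero_mem' := by simp
  add_mem' := by
    rintro a b ⟨ha, ha'⟩ ⟨hb, hb'⟩
    refine ⟨fun e he => by simp [ha e he, hb e he], fun v => ?_⟩
    simp only [Pi.add_apply, mul_add, Finset.sum_add_distrib, ha' v, hb' v]
  smul_mem' := by
    rintro c b ⟨hb, hb'⟩
    refine ⟨fun e he => by simp [hb e he], fun v => ?_⟩
    simp only [Pi.smul_apply, smul_eq_mul, mul_left_comm _ c, ← Finset.mul_sum, hb' v]

theorem mem_kirchhoffSpace {σ b : G.E → ℂ} :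
    b ∈ G.kirchhoffSpace S σ ↔ (∀ e ∉ S, b e = 0) ∧ ∀ v,
      ∑ e ∈ Finset.univ.filter (fun e => G.t e = v), σ e * b e =
        ∑ e ∈ Finset.univ.filter (fun e => G.o e = v), b e :=
  Iff.rfl

theorem finrank_kirchhoffSpace_eq_of_coboundary {σ : G.E → ℂ} {s : G.V → ℂ}
    (hs : ∀ v, s v ≠ 0) (hσ : ∀ e ∈ S, σ e * s (G.t e) = s (G.o e)) :
    finrank ℂ (G.kirchhoffSpace S σ) = finrank ℂ (G.kirchhoffSpace S 1) := by
  let Φ : (G.E → ℂ) ≃ₗ[ℂ] (G.E → ℂ) :=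
    LinearEquiv.piCongrRight fun e => LinearEquiv.smulOfNeZero ℂ ℂ (s (G.o e)) (hs _)
  have hΦ : ∀ b e, Φ b e = s (G.o e) * b e := fun _ _ => rfl
  have hsupp : ∀ b, (∀ e ∉ S, Φ b e = 0) ↔ ∀ e ∉ S, b e = 0 := fun b => by
    simp only [hΦ, mul_eq_zero, hs, false_or]
  have hdefect : ∀ b, (∀ e ∉ S, b e = 0) → ∀ v,
      ∑ e ∈ Finset.univ.filter (fun e => G.t e = v), 1 * Φ b e -
        ∑ e ∈ Finset.univ.filter (fun e => G.o e = v), Φ b e =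
      s v * (∑ e ∈ Finset.univ.filter (fun e => G.t e = v), σ e * b e -
        ∑ e ∈ Finset.univ.filter (fun e => G.o e = v), b e) := by
    intro b hb v
    rw [mul_sub, Finset.mul_sum, Finset.mul_sum]
    congr 1 <;> refine Finset.sum_congr rfl fun e he => ?_ <;>
      obtain rfl := (Finset.mem_filter.mp he).2
    · by_cases heS : e ∈ S
      · rw [hΦ, ← hσ e heS]; ring
      · rw [hΦ, hb e heS]; ring
    · rw [hΦ]
  have hK : G.kirchhoffSpace S σ = (G.kirchhoffSpace S 1).comap Φ.toLinearMap := by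
    ext b
    simp only [Submodule.mem_comap, LinearEquiv.coe_coe, mem_kirchhoffSpace, Pi.one_apply,
      hsupp]
    refine and_congr_right fun hb => forall_congr' fun v => ?_
    rw [← sub_eq_zero, ← sub_eq_zero (a := ∑ e ∈ _, 1 * Φ b e), hdefect b hb v,
      mul_eq_zero, or_iff_right (hs v)]
  rw [hK, Submodule.comap_equiv_eq_map_symm, LinearEquiv.finrank_map_eq]

def boundaryMap (G : MetricGraph) : (G.E → ℂ) →ₗ[ℂ] (G.V → ℂ) where
  toFun b v := ∑ e ∈ Finset.univ.filter (fun e => G.t e = v), b e -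
    ∑ e ∈ Finset.univ.filter (fun e => G.o e = v), b e
  map_add' a b := by funext v; simp only [Pi.add_apply, Finset.sum_add_distrib]; ring
  map_smul' c b := by funext v; simp [Finset.mul_sum, mul_sub]

def subgraphBoundary (G : MetricGraph) (S : Set G.E) : (S → ℂ) →ₗ[ℂ] (G.incVerts S → ℂ) :=
  LinearMap.funLeft ℂ ℂ Subtype.val ∘ₗ G.boundaryMap ∘ₗ
    Function.ExtendByZero.linearMap ℂ Subtype.val

theorem subgraphBoundary_apply (c : S → ℂ) (v : G.incVerts S) :
    G.subgraphBoundary S c v =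
      G.boundaryMap (Function.ExtendByZero.linearMap ℂ Subtype.val c) v :=
  rfl

theorem subgraphBoundary_single (e : S) :
    G.subgraphBoundary S (Pi.single e 1) =
      Pi.single ⟨G.t e, e, e.2, Or.inr rfl⟩ 1 - Pi.single ⟨G.o e, e, e.2, Or.inl rfl⟩ 1 := by
  have hext : Function.ExtendByZero.linearMap ℂ Subtype.val (Pi.single e 1) =
      Pi.single (e : G.E) (1 : ℂ) := by
    funext x
    by_cases hx : x ∈ S
    · simp [Function.extend_val_apply hx, Pi.single_apply, Subtype.ext_iff]
    · simp [Function.extend_val_apply' hx, show x ≠ e from fun h => hx (h ▸ e.2)]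
  funext v
  simp [subgraphBoundary_apply, hext, boundaryMap, Pi.single_apply, Subtype.ext_iff, eq_comm]

theorem boundaryMap_apply_eq_zero {b : G.E → ℂ} (hb : ∀ e ∉ S, b e = 0) {v : G.V}
    (hv : v ∉ G.incVerts S) : G.boundaryMap b v = 0 := by
  have hzero : ∀ e, G.o e = v ∨ G.t e = v → b e = 0 :=
    fun e he => hb e fun heS => hv ⟨e, heS, he⟩
  simp only [boundaryMap, LinearMap.coe_mk, AddHom.coe_mk]
  rw [Finset.sum_eq_zero fun e he => hzero e (.inr (Finset.mem_filter.mp he).2),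
    Finset.sum_eq_zero fun e he => hzero e (.inl (Finset.mem_filter.mp he).2), sub_zero]

theorem kirchhoffSpace_one_eq_map :
    G.kirchhoffSpace S 1 = (LinearMap.ker (G.subgraphBoundary S)).map
      (Function.ExtendByZero.linearMap ℂ Subtype.val) := by
  have hmem : ∀ b, b ∈ G.kirchhoffSpace S 1 ↔ (∀ e ∉ S, b e = 0) ∧ ∀ v, G.boundaryMap b v = 0 :=
    fun b => by simp [mem_kirchhoffSpace, boundaryMap, sub_eq_zero]
  ext b
  rw [hmem, Submodule.mem_map]
  constructor
  · rintro ⟨hsupp, hb⟩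
    have hext : Function.ExtendByZero.linearMap ℂ Subtype.val (fun e : S => b e) = b := by
      funext x
      by_cases hx : x ∈ S
      · simp [Function.extend_val_apply hx]
      · simp [Function.extend_val_apply' hx, hsupp x hx]
    refine ⟨fun e => b e, LinearMap.mem_ker.mpr (funext fun v => ?_), hext⟩
    rw [subgraphBoundary_apply, hext]
    exact hb v
  · rintro ⟨c, hc, rfl⟩
    have hsupp : ∀ e ∉ S, Function.ExtendByZero.linearMap ℂ Subtype.val c e = 0 :=
      fun e he => by simp [Function.extend_val_apply' he]
    refine ⟨hsupp, fun v => ?_⟩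
    by_cases hv : v ∈ G.incVerts S
    · exact congrFun (LinearMap.mem_ker.mp hc) ⟨v, hv⟩
    · exact boundaryMap_apply_eq_zero hsupp hv

theorem range_subgraphBoundary [Fintype (G.incVerts S)]
    (hconn : ∀ v ∈ G.incVerts S, ∀ w ∈ G.incVerts S, G.connRel S v w) :
    LinearMap.range (G.subgraphBoundary S) =
      LinearMap.ker (∑ v, LinearMap.proj v : (G.incVerts S → ℂ) →ₗ[ℂ] ℂ) := by
  classical
  refine le_antisymm (LinearMap.range_le_ker_iff.mpr ?_) fun φ hφ => ?_
  · ext e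
    simp [subgraphBoundary_single, Finset.sum_sub_distrib]
  rcases isEmpty_or_nonempty (G.incVerts S) with hempty | hne
  · exact Subsingleton.elim φ 0 ▸ zero_mem _
  obtain ⟨u₀⟩ := hne
  let Ψ : G.V → (G.incVerts S → ℂ) :=
    fun a => if h : a ∈ G.incVerts S then Pi.single ⟨a, h⟩ 1 else 0
  have hΨ : ∀ a b, G.connRel S a b → Ψ a - Ψ b ∈ LinearMap.range (G.subgraphBoundary S) := by
    intro a b hab
    induction hab with
    | rel a b hab =>
      obtain ⟨e, he, rfl, rfl⟩ := hab
      refine ⟨-Pi.single ⟨e, he⟩ 1, ?_⟩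
      simp [Ψ, subgraphBoundary_single, show G.o e ∈ G.incVerts S from ⟨e, he, .inl rfl⟩,
        show G.t e ∈ G.incVerts S from ⟨e, he, .inr rfl⟩]
    | refl a => simp
    | symm a b _ ih => simpa using neg_mem ih
    | trans a b c _ _ ih₁ ih₂ => simpa using add_mem ih₁ ih₂
  have hdiff : ∀ u w : G.incVerts S,
      Pi.single u 1 - Pi.single w 1 ∈ LinearMap.range (G.subgraphBoundary S) := fun u w => by
    simpa [Ψ] using hΨ u w (hconn u u.2 w w.2)
  have hφ_eq : φ = ∑ u, φ u • (Pi.single u 1 - Pi.single u₀ 1) := by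
    have hsum : ∑ u, φ u = 0 := by simpa using hφ
    rw [Finset.sum_congr rfl fun u _ => smul_sub (φ u) _ _, Finset.sum_sub_distrib,
      ← Finset.sum_smul, hsum, zero_smul, sub_zero]
    ext w
    simp [Pi.single_apply]
  rw [hφ_eq]
  exact sum_mem fun u _ => Submodule.smul_mem _ _ (hdiff u u₀)

theorem beta0_eq_one (hconn : ∀ v ∈ G.incVerts S, ∀ w ∈ G.incVerts S, G.connRel S v w)
    {v₀ : G.V} (hv₀ : v₀ ∈ G.incVerts S) : G.beta0 S = 1 := by
  rw [beta0, Set.ncard_eq_one]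
  refine ⟨G.component S v₀, Set.eq_singleton_iff_unique_mem.mpr ⟨⟨v₀, hv₀, rfl⟩, ?_⟩⟩
  rintro _ ⟨v, hv, rfl⟩
  ext w
  exact ⟨(hconn v₀ hv₀ v hv).trans _ _ _, (hconn v hv v₀ hv₀).trans _ _ _⟩

theorem finrank_kirchhoffSpace_one
    (hconn : ∀ v ∈ G.incVerts S, ∀ w ∈ G.incVerts S, G.connRel S v w) :
    (finrank ℂ (G.kirchhoffSpace S 1) : ℤ) = G.beta1 S := by
  classical
  set ε : (G.incVerts S → ℂ) →ₗ[ℂ] ℂ := ∑ v, LinearMap.proj v with hε_def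
  have hcard : ∀ {α : Type} (T : Set α) [Fintype T], finrank ℂ (T → ℂ) = T.ncard :=
    fun T _ => by
      rw [Module.finrank_fintype_fun_eq_card, ← Nat.card_eq_fintype_card, Nat.card_coe_set_eq]
  have hK : finrank ℂ (G.kirchhoffSpace S 1) =
      finrank ℂ (LinearMap.ker (G.subgraphBoundary S)) := by
    rw [kirchhoffSpace_one_eq_map]
    exact (Submodule.equivMapOfInjective _
      (Function.extend_injective Subtype.val_injective (0 : G.E → ℂ)) _).finrank_eq.symm
  have hβ : finrank ℂ (LinearMap.range ε) = G.beta0 S := by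
    rcases (G.incVerts S).eq_empty_or_nonempty with hempty | ⟨v₀, hv₀⟩
    · have := ε.finrank_range_le
      simp only [hcard, hempty, Set.ncard_empty, Nat.le_zero] at this
      simp [beta0, hempty, this]
    · rw [beta0_eq_one hconn hv₀,
        LinearMap.range_eq_top.mpr fun z => ⟨Pi.single ⟨v₀, hv₀⟩ z, by simp [ε]⟩,
        finrank_top, Module.finrank_self]
  have hD := (G.subgraphBoundary S).finrank_range_add_finrank_ker
  have hε := ε.finrank_range_add_finrank_ker
  rw [range_subgraphBoundary hconn, ← hε_def, hcard] at hD
  rw [hcard, hβ] at hε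
  rw [beta1, hK]
  omega

def sineMap (G : MetricGraph) (ω : ℂ) : (G.E → ℂ) →ₗ[ℂ] (G.E → ℝ → ℂ) where
  toFun b e x := b e * Complex.sin (ω * x)
  map_add' a b := by funext e x; simp [add_mul]
  map_smul' c b := by funext e x; simp [mul_assoc]

@[simp]
theorem sineMap_apply (ω : ℂ) (b : G.E → ℂ) (e : G.E) (x : ℝ) :
    G.sineMap ω b e x = b e * Complex.sin (ω * x) := rfl

theorem hasDerivAt_sineMap (ω : ℂ) (b : G.E → ℂ) (e : G.E) (x : ℝ) :
    HasDerivAt (G.sineMap ω b e) (b e * (ω * Complex.cos (ω * x))) x :=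
  (hasDerivAt_sin_mul_ofReal ω x).const_mul (b e)

theorem sineMap_injective {ω : ℂ} (hω : ω ≠ 0) : Function.Injective (G.sineMap ω) := by
  intro b b' h
  funext e
  have h0 := congrArg (fun F => deriv (F e) 0) h
  simp only [(hasDerivAt_sineMap ω _ e 0).deriv, Complex.ofReal_zero, mul_zero,
    Complex.cos_zero, mul_one] at h0
  exact mul_right_cancel₀ hω h0

theorem normDer_sineMap (ω : ℂ) (b : G.E → ℂ) (v : G.V) :
    G.normDer (G.sineMap ω b) v = ω *
      (∑ e ∈ Finset.univ.filter (fun e => G.t e = v), Complex.cos (ω * G.L e) * b e -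
        ∑ e ∈ Finset.univ.filter (fun e => G.o e = v), b e) := by
  simp only [normDer, fun e x => (hasDerivAt_sineMap ω b e x).deriv, Complex.ofReal_zero,
    mul_zero, Complex.cos_zero, mul_one, mul_sub, Finset.mul_sum]
  congr 1 <;> exact Finset.sum_congr rfl fun _ _ => by ring

theorem sin_sqrt_mul_eq_zero_iff {lam : ℝ} (hlam : 0 < lam) (e : G.E) :
    Complex.sin (Real.sqrt lam * G.L e) = 0 ↔ e ∈ G.lamEdges lam := by
  have hω : 0 < Real.sqrt lam := Real.sqrt_pos.mpr hlam
  rw [← Complex.ofReal_mul, ← Complex.ofReal_sin, Complex.ofReal_eq_zero, Real.sin_eq_zero_iff]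
  constructor
  · rintro ⟨n, hn⟩
    have hn0 : 0 < n := by
      have := mul_pos hω (G.L_pos e)
      rw [← hn] at this
      exact_mod_cast pos_of_mul_pos_left this Real.pi_pos.le
    refine ⟨n.toNat, by omega, ?_⟩
    rw [show ((n.toNat : ℕ) : ℝ) = n by exact_mod_cast Int.toNat_of_nonneg hn0.le]
    field_simp
    linarith
  · rintro ⟨k, -, hk⟩
    exact ⟨k, by rw [hk]; push_cast; field_simp⟩

theorem cos_sqrt_mul_eq_neg_one_pow {lam : ℝ} (hlam : 0 < lam) {e : G.E} {k : ℕ}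
    (hk : G.L e = k * (π / Real.sqrt lam)) :
    Complex.cos (Real.sqrt lam * G.L e) = (-1) ^ k := by
  have hω : Real.sqrt lam ≠ 0 := (Real.sqrt_pos.mpr hlam).ne'
  rw [← Complex.ofReal_mul, ← Complex.ofReal_cos, hk,
    show Real.sqrt lam * (k * (π / Real.sqrt lam)) = k * π by field_simp, Real.cos_nat_mul_pi]
  push_cast
  rfl

theorem eq_sineMap_of_mem_resSet {lam : ℝ} (hlam : 0 < lam) {f : G.E → ℝ → ℂ}
    (hf : f ∈ G.resSet lam) :
    f = G.sineMap (Real.sqrt lam) fun e => deriv (f e) 0 / Real.sqrt lam := by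
  obtain ⟨⟨⟨hsmooth, hode, -⟩, -⟩, hvanish⟩ := hf
  have hω : (Real.sqrt lam : ℂ) ≠ 0 := by exact_mod_cast (Real.sqrt_pos.mpr hlam).ne'
  have hω2 : (Real.sqrt lam : ℂ) ^ 2 = lam := by exact_mod_cast Real.sq_sqrt hlam.le
  funext e x
  have := eq_cos_add_sin_of_hasDerivAt hω
    (fun y => ((hsmooth e).differentiable two_ne_zero y).hasDerivAt)
    (fun y => by
      simpa [hω2, hode e y] using ((hsmooth e).differentiable_deriv_two y).hasDerivAt) x
  simpa [(hvanish e).1] using this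

theorem resSet_eq_map_sineMap {lam : ℝ} (hlam : 0 < lam) :
    G.resSet lam = ((G.kirchhoffSpace (G.lamEdges lam)
      fun e => Complex.cos (Real.sqrt lam * G.L e)).map (G.sineMap (Real.sqrt lam)) : Set _) := by
  have hω : (Real.sqrt lam : ℂ) ≠ 0 := by exact_mod_cast (Real.sqrt_pos.mpr hlam).ne'
  have hω2 : (Real.sqrt lam : ℂ) ^ 2 = lam := by exact_mod_cast Real.sq_sqrt hlam.le
  set ω : ℂ := (Real.sqrt lam : ℂ)
  ext f
  simp only [SetLike.mem_coe, Submodule.mem_map]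
  constructor
  · intro hf
    refine ⟨_, ⟨fun e he => ?_, fun v => ?_⟩, (eq_sineMap_of_mem_resSet hlam hf).symm⟩
    · have hL := (hf.2 e).2
      rw [eq_sineMap_of_mem_resSet hlam hf] at hL
      exact (mul_eq_zero.mp hL).resolve_right (mt (sin_sqrt_mul_eq_zero_iff hlam e).mp he)
    · have hv := hf.1.2 v
      rw [eq_sineMap_of_mem_resSet hlam hf, normDer_sineMap] at hv
      exact sub_eq_zero.mp ((mul_eq_zero.mp hv).resolve_left hω)
  · rintro ⟨b, ⟨hsupp, hkirch⟩, rfl⟩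
    have hzero : ∀ e, G.sineMap ω b e 0 = 0 := fun e => by simp
    have hzeroL : ∀ e, G.sineMap ω b e (G.L e) = 0 := fun e => by
      by_cases he : e ∈ G.lamEdges lam
      · simp [ω, (sin_sqrt_mul_eq_zero_iff hlam e).mpr he]
      · simp [hsupp e he]
    refine ⟨⟨⟨fun e => ?_, fun e x => ?_, ?_⟩, fun v => ?_⟩, fun e => ⟨hzero e, hzeroL e⟩⟩
    · exact contDiff_const.mul ((Complex.contDiff_sin.restrict_scalars ℝ).comp
        (contDiff_const.mul Complex.ofRealCLM.contDiff))
    · rw [show deriv (G.sineMap ω b e) = _ from funext fun y => (hasDerivAt_sineMap ω b e y).deriv,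
        (((hasDerivAt_cos_mul_ofReal ω x).const_mul ω).const_mul (b e)).deriv, ← hω2]
      simp only [sineMap_apply]
      ring
    · exact ⟨fun _ _ _ => by rw [hzero, hzero], fun _ _ _ => by rw [hzero, hzeroL],
        fun _ _ _ => by rw [hzeroL, hzeroL]⟩
    · rw [normDer_sineMap, hkirch v, sub_self, mul_zero]

theorem dimRes_eq_finrank_kirchhoffSpace {lam : ℝ} (hlam : 0 < lam) :
    G.dimRes lam = finrank ℂ (G.kirchhoffSpace (G.lamEdges lam)
      fun e => Complex.cos (Real.sqrt lam * G.L e)) := by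
  have hω : (Real.sqrt lam : ℂ) ≠ 0 := by exact_mod_cast (Real.sqrt_pos.mpr hlam).ne'
  rw [dimRes, resSet_eq_map_sineMap hlam, Submodule.span_eq]
  exact (Submodule.equivMapOfInjective _ (sineMap_injective hω) _).finrank_eq.symm

end MetricGraph

/-- if `G_λ` is connected and contains no cycle of odd length with
respect to `π/√λ`, then `dim R(G, λ) = β₁(G_λ)`. -/
theorem statement_1 (G : MetricGraph) (lam : ℝ) (hlam : 0 < lam)
    (hconn : ∀ v ∈ G.incVerts (G.lamEdges lam), ∀ w ∈ G.incVerts (G.lamEdges lam),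
      G.connRel (G.lamEdges lam) v w)
    (hnoodd : ¬ ∃ c : G.Cycle, c.inSub (G.lamEdges lam) ∧ c.oddLength (π / Real.sqrt lam)) :
    (G.dimRes lam : ℤ) = G.beta1 (G.lamEdges lam) := by
  classical
  obtain ⟨k, hk⟩ : ∃ k : G.E → ℕ, ∀ e ∈ G.lamEdges lam, G.L e = k e * (π / Real.sqrt lam) :=
    ⟨fun e => if he : e ∈ G.lamEdges lam then he.choose else 0,
      fun e he => by simpa [dif_pos he] using he.choose_spec.2⟩
  obtain ⟨p, hp⟩ := MetricGraph.exists_even_potential hk hnoodd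
  have hsign : ∀ e ∈ G.lamEdges lam,
      Complex.cos (Real.sqrt lam * G.L e) * (-1) ^ p (G.t e) = (-1) ^ p (G.o e) := by
    intro e he
    rw [MetricGraph.cos_sqrt_mul_eq_neg_one_pow hlam (hk e he), ← pow_add]
    refine neg_one_pow_congr ?_
    have := hp e he
    rw [add_assoc, Nat.even_add] at this
    exact this.symm
  rw [MetricGraph.dimRes_eq_finrank_kirchhoffSpace hlam,
    MetricGraph.finrank_kirchhoffSpace_eq_of_coboundary (s := fun v => (-1) ^ p v) (by simp) hsign,
    MetricGraph.finrank_kirchhoffSpace_one hconn]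
end
end

section
/- Let G be a finite metric graph, let λ > 0, and suppose G contains a cycle C such that the length of every edge of C is a positive integer multiple of π/√λ and the total length of C is an even integer multiple of π/√λ. Then λ is a resonance of G; more precisely, there exist signs α_e ∈ {−1, +1} for the edges e of C such that the function f defined by f_e(x) = α_e sin(√λ x) for edges e of C and f_e = 0 for all other edges is a nonzero element of R(G, λ). -/
/-!
On the `i`-th edge of the cycle, of length `kᵢ π / √λ`, the candidate is `± sin (√λ τ)` in the
arclength `τ` of the traversal, so it vanishes at every vertex and its derivative along the
traversal changes by the factor `(-1)^kᵢ` from the start of the edge to its end. Choosing the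
signs so that this derivative is continuous where consecutive edges meet makes the Kirchhoff
sums telescope at every vertex; going once around the cycle the signs close up precisely
because `∑ kᵢ` is even.
-/

open Real Set Filter Topology

noncomputable section

lemma Fin.exists_forall_add_one_eq_mul_of_prod_eq_one {M : Type*} [CommMonoid M] {n : ℕ}
    [NeZero n] (ε : Fin n → M) (hε : ∏ i, ε i = 1) :
    ∃ β : Fin n → M, ∀ i, β (i + 1) = β i * ε i := by
  obtain ⟨N, rfl⟩ := Nat.exists_eq_succ_of_ne_zero (NeZero.ne n)
  refine ⟨fun i => Fin.partialProd ε i.castSucc, fun i => ?_⟩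
  rw [← Fin.partialProd_succ]
  rcases Fin.eq_castSucc_or_eq_last i with ⟨j, rfl⟩ | rfl
  · rw [Fin.coeSucc_eq_succ, Fin.succ_castSucc]
  · rw [Fin.last_add_one, Fin.succ_last]
    have hlast : Fin.partialProd ε (Fin.last (N + 1)) = ∏ i, ε i := by
      rw [Fin.partialProd, List.take_of_length_le (by simp), List.prod_ofFn]
    simp only [Fin.castSucc_zero, Fin.partialProd_zero, hlast, hε]

lemma hasDerivAt_ofReal_sin_mul (s x : ℝ) :
    HasDerivAt (fun y : ℝ => (Real.sin (s * y) : ℂ)) (s * Real.cos (s * x) : ℝ) x := by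
  simpa [mul_comm] using (((hasDerivAt_id x).const_mul s).sin).ofReal_comp

lemma hasDerivAt_ofReal_cos_mul (s x : ℝ) :
    HasDerivAt (fun y : ℝ => (Real.cos (s * y) : ℂ)) (-(s * Real.sin (s * x)) : ℝ) x := by
  simpa [mul_comm] using (((hasDerivAt_id x).const_mul s).cos).ofReal_comp

lemma deriv_const_mul_ofReal_sin_mul (A : ℂ) (s : ℝ) :
    deriv (fun y : ℝ => A * (Real.sin (s * y) : ℂ)) = fun x => A * s * Real.cos (s * x) := by
  funext x
  rw [((hasDerivAt_ofReal_sin_mul s x).const_mul A).deriv]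
  push_cast
  ring

lemma deriv_deriv_const_mul_ofReal_sin_mul (A : ℂ) (s x : ℝ) :
    deriv (deriv fun y : ℝ => A * (Real.sin (s * y) : ℂ)) x =
      -((s ^ 2 : ℝ) : ℂ) * (A * Real.sin (s * x)) := by
  rw [deriv_const_mul_ofReal_sin_mul, ((hasDerivAt_ofReal_cos_mul s x).const_mul (A * s)).deriv]
  push_cast
  ring

lemma contDiff_const_mul_ofReal_sin_mul (A : ℂ) (s : ℝ) {n : WithTop ℕ∞} :
    ContDiff ℝ n fun y : ℝ => A * (Real.sin (s * y) : ℂ) :=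
  contDiff_const.mul <| Complex.ofRealCLM.contDiff.comp <|
    Real.contDiff_sin.comp <| contDiff_const.mul contDiff_id

namespace MetricGraph

variable {G : MetricGraph}

lemma contVert_of_forall_eq_zero {f : G.E → ℝ → ℂ} (hf : ∀ e, f e 0 = 0 ∧ f e (G.L e) = 0) :
    G.ContVert f :=
  ⟨fun e₁ e₂ _ => by rw [(hf e₁).1, (hf e₂).1], fun e₁ e₂ _ => by rw [(hf e₁).1, (hf e₂).2],
    fun e₁ e₂ _ => by rw [(hf e₁).2, (hf e₂).2]⟩

lemma isResonance_of_mem_resSet {lam : ℝ} {f : G.E → ℝ → ℂ} (hf : f ∈ G.resSet lam)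
    (hf₀ : f ≠ 0) : G.IsResonance lam := fun h => hf₀ (by simpa [h] using hf)

lemma normDer_eq_sum (f : G.E → ℝ → ℂ) (v : G.V) :
    G.normDer f v = ∑ e, ((if G.t e = v then deriv (f e) (G.L e) else 0) -
      if G.o e = v then deriv (f e) 0 else 0) := by
  rw [normDer, Finset.sum_filter, Finset.sum_filter, Finset.sum_sub_distrib]

/-- With `a`, `b` the derivatives of `f e` at `0` and `L e`: the contribution of `e` to
`∂_ν f (v)`, split between the two ends of its traversal in direction `d`. -/
lemma flux_eq_esrc_add_edst (e : G.E) (d : Bool) (v : G.V) (a b : ℂ) :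
    ((if G.t e = v then b else 0) - if G.o e = v then a else 0) =
      (if G.esrc e d = v then (if d then -a else b) else 0) +
        if G.edst e d = v then (if d then b else -a) else 0 := by
  cases d <;> simp only [esrc, edst, Bool.false_eq_true, if_true, if_false] <;>
    split_ifs <;> ring

namespace Cycle

instance (c : G.Cycle) : NeZero c.n := ⟨c.npos.ne'⟩

lemma edst_eq_esrc_add_one (c : G.Cycle) (i : Fin c.n) :
    G.edst (c.edge i) (c.dir i) = G.esrc (c.edge (i + 1)) (c.dir (i + 1)) := by
  have hi : (i + 1 : Fin c.n) = ⟨(i + 1) % c.n, Nat.mod_lt _ c.npos⟩ :=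
    Fin.ext (by simp [Fin.val_add])
  rw [hi, c.chain i]

lemma length_eq_sum_mul (c : G.Cycle) {k : Fin c.n → ℕ} {u : ℝ}
    (hk : ∀ i, G.L (c.edge i) = k i * u) : c.length = (∑ i, k i : ℕ) * u := by
  simp only [length, hk, Nat.cast_sum, Finset.sum_mul]

/-- `p i` is the derivative of `f` along the `i`-th edge of the cycle, in the direction of
traversal, at its start; `hdst` makes it continuous where consecutive edges meet, so the
Kirchhoff sums telescope. -/
lemma normDer_eq_zero_of_flux (c : G.Cycle) {f : G.E → ℝ → ℂ}
    (hoff : ∀ e ∉ Set.range c.edge, deriv (f e) 0 = 0 ∧ deriv (f e) (G.L e) = 0)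
    (p : Fin c.n → ℂ)
    (hsrc : ∀ i, (if c.dir i then -deriv (f (c.edge i)) 0
      else deriv (f (c.edge i)) (G.L (c.edge i))) = -p i)
    (hdst : ∀ i, (if c.dir i then deriv (f (c.edge i)) (G.L (c.edge i))
      else -deriv (f (c.edge i)) 0) = p (i + 1))
    (v : G.V) : G.normDer f v = 0 := by
  rw [normDer_eq_sum, ← Fintype.sum_of_injective c.edge c.edge_inj _ _
    (fun e he => by simp [(hoff e he).1, (hoff e he).2]) (fun i => rfl)]
  set q : Fin c.n → ℂ := fun i => if G.esrc (c.edge i) (c.dir i) = v then p i else 0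
  have hedge : ∀ i, ((if G.t (c.edge i) = v then deriv (f (c.edge i)) (G.L (c.edge i)) else 0) -
      if G.o (c.edge i) = v then deriv (f (c.edge i)) 0 else 0) = q (i + 1) - q i := by
    intro i
    rw [flux_eq_esrc_add_edst _ (c.dir i), hsrc, hdst, edst_eq_esrc_add_one]
    simp only [q]
    split_ifs <;> ring
  rw [Finset.sum_congr rfl fun i _ => hedge i, Finset.sum_sub_distrib, sub_eq_zero]
  exact Equiv.sum_comp (Equiv.addRight (1 : Fin c.n)) q

def sineWave (c : G.Cycle) (α : G.E → ℤ) (s : ℝ) : G.E → ℝ → ℂ :=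
  fun e x => if ∃ i, c.edge i = e then (α e : ℂ) * (Real.sin (s * x) : ℂ) else 0

lemma sineWave_edge (c : G.Cycle) (α : G.E → ℤ) (s : ℝ) (i : Fin c.n) :
    c.sineWave α s (c.edge i) = fun x => (α (c.edge i) : ℂ) * (Real.sin (s * x) : ℂ) := by
  funext x
  exact if_pos ⟨i, rfl⟩

lemma sineWave_of_not_mem_range (c : G.Cycle) (α : G.E → ℤ) (s : ℝ) {e : G.E}
    (he : e ∉ Set.range c.edge) : c.sineWave α s e = 0 := by
  funext x
  exact if_neg he

lemma deriv_sineWave_edge (c : G.Cycle) (α : G.E → ℤ) (s : ℝ) (i : Fin c.n) (x : ℝ) :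
    deriv (c.sineWave α s (c.edge i)) x = α (c.edge i) * s * Real.cos (s * x) := by
  rw [sineWave_edge, deriv_const_mul_ofReal_sin_mul]

section Resonance

variable (c : G.Cycle) {s : ℝ} {k : Fin c.n → ℕ}

lemma mul_L_edge_eq_nat_mul_pi (hk : ∀ i, G.L (c.edge i) = k i * (π / s)) (hs : s ≠ 0)
    (i : Fin c.n) : s * G.L (c.edge i) = k i * π := by
  rw [hk i]
  field_simp

lemma sineWave_eq_zero_at_ends (α : G.E → ℤ) (hk : ∀ i, G.L (c.edge i) = k i * (π / s))
    (hs : s ≠ 0) (e : G.E) : c.sineWave α s e 0 = 0 ∧ c.sineWave α s e (G.L e) = 0 := by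
  by_cases he : e ∈ Set.range c.edge
  · obtain ⟨i, rfl⟩ := he
    simp [sineWave_edge, c.mul_L_edge_eq_nat_mul_pi hk hs i, Real.sin_nat_mul_pi]
  · simp [sineWave_of_not_mem_range _ _ _ he]

lemma normDer_sineWave_eq_zero (hk : ∀ i, G.L (c.edge i) = k i * (π / s)) (hs : s ≠ 0)
    {α : G.E → ℤ} {β : Fin c.n → ℤ} (hβ : ∀ i, β (i + 1) = β i * (-1) ^ k i)
    (hα : ∀ i, α (c.edge i) = if c.dir i then β i else -(β i * (-1) ^ k i)) (v : G.V) :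
    G.normDer (c.sineWave α s) v = 0 := by
  have hd₀ : ∀ i, deriv (c.sineWave α s (c.edge i)) 0 = α (c.edge i) * s := by
    simp [deriv_sineWave_edge]
  have hdL : ∀ i, deriv (c.sineWave α s (c.edge i)) (G.L (c.edge i)) =
      α (c.edge i) * s * (-1) ^ k i := by
    simp [deriv_sineWave_edge, c.mul_L_edge_eq_nat_mul_pi hk hs, Real.cos_nat_mul_pi]
  have hsq : ∀ i, ((-1 : ℂ) ^ k i) * (-1) ^ k i = 1 := fun i =>
    pow_mul_pow_eq_one (k i) (by norm_num)
  refine c.normDer_eq_zero_of_flux (fun e he => ?_) (fun i => s * β i) (fun i => ?_)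
    (fun i => ?_) v
  · simp [sineWave_of_not_mem_range _ _ _ he]
  · rw [hd₀, hdL, hα]
    cases c.dir i <;> simp only [Bool.false_eq_true, ↓reduceIte] <;> push_cast
    · linear_combination (-(s : ℂ) * β i) * hsq i
    · ring
  · rw [hd₀, hdL, hα, hβ]
    cases c.dir i <;> simp only [Bool.false_eq_true, ↓reduceIte] <;> push_cast <;> ring

lemma sineWave_mem_resSet (hk : ∀ i, G.L (c.edge i) = k i * (π / s)) (hs : s ≠ 0)
    {α : G.E → ℤ} {β : Fin c.n → ℤ} (hβ : ∀ i, β (i + 1) = β i * (-1) ^ k i)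
    (hα : ∀ i, α (c.edge i) = if c.dir i then β i else -(β i * (-1) ^ k i)) :
    c.sineWave α s ∈ G.resSet (s ^ 2) := by
  have hends := c.sineWave_eq_zero_at_ends α hk hs
  refine ⟨⟨⟨fun e => ?_, fun e x => ?_, contVert_of_forall_eq_zero hends⟩,
    c.normDer_sineWave_eq_zero hk hs hβ hα⟩, hends⟩
  · by_cases he : e ∈ Set.range c.edge
    · obtain ⟨i, rfl⟩ := he
      rw [sineWave_edge]
      exact contDiff_const_mul_ofReal_sin_mul _ _
    · rw [sineWave_of_not_mem_range _ _ _ he]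
      exact contDiff_const
  · by_cases he : e ∈ Set.range c.edge
    · obtain ⟨i, rfl⟩ := he
      rw [sineWave_edge, deriv_deriv_const_mul_ofReal_sin_mul]
    · simp [sineWave_of_not_mem_range _ _ _ he]

lemma exists_sineWave_mem_resSet (hk : ∀ i, G.L (c.edge i) = k i * (π / s)) (hs : s ≠ 0)
    (heven : Even (∑ i, k i)) :
    ∃ α : G.E → ℤ, (∀ i, α (c.edge i) = 1 ∨ α (c.edge i) = -1) ∧
      c.sineWave α s ∈ G.resSet (s ^ 2) := by
  obtain ⟨β, hβ⟩ := Fin.exists_forall_add_one_eq_mul_of_prod_eq_one (fun i => (-1 : ℤˣ) ^ k i)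
    (by rw [Finset.prod_pow_eq_pow_sum, heven.neg_one_pow])
  set γ : Fin c.n → ℤˣ := fun i => if c.dir i then β i else -(β i * (-1) ^ k i)
  have hextend : ∀ i, Function.extend c.edge (fun i => (γ i : ℤ)) 1 (c.edge i) = γ i :=
    c.edge_inj.extend_apply _ _
  refine ⟨Function.extend c.edge (fun i => (γ i : ℤ)) 1, fun i => ?_,
    c.sineWave_mem_resSet hk hs (β := fun i => (β i : ℤ)) (fun i => ?_) (fun i => ?_)⟩
  · rw [hextend]
    rcases Int.units_eq_one_or (γ i) with h | h <;> simp [h]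
  · simp [hβ]
  · rw [hextend]
    simp only [γ]
    split_ifs <;> simp

lemma sineWave_ne_zero {α : G.E → ℤ} (hs : s ≠ 0) {i : Fin c.n}
    (hα : α (c.edge i) ≠ 0) : c.sineWave α s ≠ 0 := by
  intro h
  have := congrFun (congrFun h (c.edge i)) (π / (2 * s))
  have hx : s * (π / (2 * s)) = π / 2 := by field_simp
  simp [sineWave_edge, hx, hα] at this

end Resonance

end Cycle

end MetricGraph

/-- if `G` contains a cycle `C` all of whose edge lengths are positive
integer multiples of `π/√λ` and whose total length is an even integer multiple of
`π/√λ`, then `λ` is a resonance of `G`; more precisely there are signs `α_e ∈ {−1, +1}`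
on the edges of `C` such that `f_e(x) = α_e sin(√λ x)` on the edges of `C`, extended by
`0`, is a nonzero element of `R(G, λ)`. -/
theorem statement_5 (G : MetricGraph) (lam : ℝ) (hlam : 0 < lam) (c : G.Cycle)
    (hedges : ∀ i, ∃ k : ℕ, 0 < k ∧ G.L (c.edge i) = k * (π / Real.sqrt lam))
    (htotal : ∃ m : ℕ, Even m ∧ c.length = m * (π / Real.sqrt lam)) :
    G.IsResonance lam ∧
    ∃ α : G.E → ℤ, (∀ i, α (c.edge i) = 1 ∨ α (c.edge i) = -1) ∧
      (fun e x => if ∃ i, c.edge i = e then (α e : ℂ) * (Real.sin (Real.sqrt lam * x) : ℂ)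
        else 0) ∈ G.resSet lam ∧
      (fun e x => if ∃ i, c.edge i = e then (α e : ℂ) * (Real.sin (Real.sqrt lam * x) : ℂ)
        else 0) ≠ (0 : G.E → ℝ → ℂ) := by
  choose k _ hk using hedges
  obtain ⟨m, hm, hlength⟩ := htotal
  have hs : Real.sqrt lam ≠ 0 := (Real.sqrt_pos.2 hlam).ne'
  have hsum : ∑ i, k i = m := by
    rw [c.length_eq_sum_mul hk] at hlength
    exact_mod_cast mul_right_cancel₀ (div_ne_zero Real.pi_ne_zero hs) hlength
  obtain ⟨α, hα, hmem⟩ := c.exists_sineWave_mem_resSet hk hs (hsum ▸ hm)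
  rw [Real.sq_sqrt hlam.le] at hmem
  have hne : c.sineWave α (Real.sqrt lam) ≠ 0 :=
    c.sineWave_ne_zero hs (i := 0) (by rcases hα 0 with h | h <;> simp [h])
  exact ⟨MetricGraph.isResonance_of_mem_resSet hmem hne, α, hα, hmem, hne⟩
end
end

section
/- Let G be a finite metric graph and let λ_G := inf { π²/u_C² : C a cycle in G with commensurate edges }. Then G has no resonance in the interval (−∞, λ_G). -/
open Real Set Filter Topology

noncomputable section

/-!
On each edge a resonance `f` solves `-f'' = λ f` with Dirichlet conditions, so it is `f_e'(0)`
times the sine kernel of `λ`. For `λ ≤ 0` this kernel does not vanish at `L e`, so `f_e = 0`; for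
`λ > 0` an edge carrying `f_e ≠ 0` has length `k π / √λ` and `f_e'(L e) = ± f_e'(0) ≠ 0`.
Kirchhoff's condition then forbids a vertex meeting exactly one edge of the support of `f`, so the
support contains a cycle. All its edge lengths are multiples of `π / √λ`, hence `u_C ≥ π / √λ`
and `λ_G ≤ π² / u_C² ≤ λ`.
-/

theorem eq_zero_of_hasDerivAt_mul_self {a : ℂ} {k : ℝ → ℂ}
    (hk : ∀ x, HasDerivAt k (a * k x) x) (h0 : k 0 = 0) : k = 0 := by
  have hconst : ∀ x, HasDerivAt (fun y : ℝ => k y * Complex.exp (-(a * y))) 0 x := fun x =>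
    ((hk x).mul (((hasDerivAt_id (x : ℂ)).const_mul a).neg.comp_ofReal).cexp).congr_deriv
      (by simp only [id_eq, Pi.neg_apply, mul_one, mul_neg]; ring)
  funext x
  have h := is_const_of_deriv_eq_zero (fun y => (hconst y).differentiableAt)
    (fun y => (hconst y).deriv) x 0
  simpa [h0, Complex.exp_ne_zero] using h

/-- Factor `c = ω²`: then `h' - ω h` and `h` solve first order linear equations. -/
theorem eq_zero_of_hasDerivAt_hasDerivAt_mul {c : ℂ} {h h' : ℝ → ℂ}
    (hh : ∀ x, HasDerivAt h (h' x) x) (hh' : ∀ x, HasDerivAt h' (c * h x) x)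
    (h0 : h 0 = 0) (h0' : h' 0 = 0) : h = 0 := by
  obtain ⟨ω, rfl⟩ := IsAlgClosed.exists_pow_nat_eq c two_pos
  have hk : ∀ x, h' x - ω * h x = 0 := congrFun <| eq_zero_of_hasDerivAt_mul_self (a := -ω)
    (fun x => ((hh' x).sub ((hh x).const_mul ω)).congr_deriv (by ring)) (by simp [h0, h0'])
  exact eq_zero_of_hasDerivAt_mul_self (a := ω)
    (fun x => (hh x).congr_deriv (by linear_combination hk x)) h0

theorem hasDerivAt_and_hasDerivAt_deriv {f : ℝ → ℂ} (hf : ContDiff ℝ 2 f) (x : ℝ) :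
    HasDerivAt f (deriv f x) x ∧ HasDerivAt (deriv f) (deriv (deriv f) x) x := by
  obtain ⟨hdiff, -, hderiv⟩ := (contDiff_succ_iff_deriv (n := 1)).mp (by exact_mod_cast hf)
  exact ⟨(hdiff x).hasDerivAt, ((hderiv.differentiable one_ne_zero) x).hasDerivAt⟩

theorem eq_deriv_zero_mul_of_fundamental {c : ℂ} {φ φ' f : ℝ → ℂ}
    (hφ : ∀ x, HasDerivAt φ (φ' x) x) (hφ' : ∀ x, HasDerivAt φ' (c * φ x) x)
    (hφ0 : φ 0 = 0) (hφ'0 : φ' 0 = 1) (hf : ContDiff ℝ 2 f)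
    (hode : ∀ x, deriv (deriv f) x = c * f x) (hf0 : f 0 = 0) (x : ℝ) :
    f x = deriv f 0 * φ x ∧ deriv f x = deriv f 0 * φ' x := by
  have hdf x := (hasDerivAt_and_hasDerivAt_deriv hf x).1
  have hdiff : (fun y => f y - deriv f 0 * φ y) = 0 := by
    refine eq_zero_of_hasDerivAt_hasDerivAt_mul (c := c)
      (h' := fun y => deriv f y - deriv f 0 * φ' y)
      (fun y => (hdf y).sub ((hφ y).const_mul _)) (fun y => ?_) (by simp [hf0, hφ0])
      (by simp [hφ'0])
    refine ((hasDerivAt_and_hasDerivAt_deriv hf y).2.sub ((hφ' y).const_mul _)).congr_deriv ?_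
    rw [hode]; ring
  have hfeq : f = fun y => deriv f 0 * φ y := funext fun y => sub_eq_zero.mp (congrFun hdiff y)
  have hbφ := (hφ x).const_mul (deriv f 0)
  rw [← hfeq] at hbφ
  exact ⟨congrFun hfeq x, (hdf x).unique hbφ⟩

theorem deriv_eq_zero_of_dirichlet_of_nonpos {lam L : ℝ} (hlam : lam ≤ 0) (hL : 0 < L)
    {f : ℝ → ℂ} (hf : ContDiff ℝ 2 f) (hode : ∀ x, deriv (deriv f) x = -(lam : ℂ) * f x)
    (hf0 : f 0 = 0) (hfL : f L = 0) : deriv f 0 = 0 := by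
  rcases hlam.lt_or_eq with hneg | rfl
  · set s := √(-lam)
    have hs : 0 < s := Real.sqrt_pos.mpr (neg_pos.mpr hneg)
    have hs2 : s ^ 2 = -lam := Real.sq_sqrt (neg_nonneg.mpr hneg.le)
    have hsin x : HasDerivAt (fun y => Real.sinh (s * y) / s) (Real.cosh (s * x)) x :=
      (((hasDerivAt_id' x).const_mul s).sinh.div_const s).congr_deriv (by field_simp)
    have hcos x : HasDerivAt (fun y => Real.cosh (s * y)) (-lam * (Real.sinh (s * x) / s)) x :=
      ((hasDerivAt_id' x).const_mul s).cosh.congr_deriv (by field_simp; rw [hs2]; ring)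
    have hval := (eq_deriv_zero_mul_of_fundamental (fun x => (hsin x).ofReal_comp)
      (fun x => ((hcos x).ofReal_comp).congr_deriv (by push_cast; ring))
      (by simp) (by simp) hf hode hf0 L).1
    have hsinh : (0 : ℝ) < Real.sinh (s * L) / s :=
      div_pos (Real.sinh_pos_iff.mpr (by positivity)) hs
    rw [hfL, eq_comm, mul_eq_zero] at hval
    exact hval.resolve_right (Complex.ofReal_ne_zero.mpr hsinh.ne')
  · have hval := (eq_deriv_zero_mul_of_fundamental (φ := fun x => (x : ℂ)) (φ' := fun _ => 1)
      (fun x => (hasDerivAt_id x).ofReal_comp) (fun x => (hasDerivAt_const x _).congr_deriv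
        (zero_mul _).symm) rfl rfl hf (fun x => by simpa using hode x) hf0 L).1
    rw [hfL, eq_comm, mul_eq_zero] at hval
    exact hval.resolve_right (Complex.ofReal_ne_zero.mpr hL.ne')

theorem exists_nat_of_dirichlet_of_pos {lam L : ℝ} (hlam : 0 < lam) (hL : 0 < L)
    {f : ℝ → ℂ} (hf : ContDiff ℝ 2 f) (hode : ∀ x, deriv (deriv f) x = -(lam : ℂ) * f x)
    (hf0 : f 0 = 0) (hfL : f L = 0) (hf0' : deriv f 0 ≠ 0) :
    ∃ k : ℕ, 0 < k ∧ L = k * (π / √lam) ∧ deriv f L = (-1) ^ k * deriv f 0 := by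
  set s := √lam
  have hs : 0 < s := Real.sqrt_pos.mpr hlam
  have hs2 : s ^ 2 = lam := Real.sq_sqrt hlam.le
  have hsin x : HasDerivAt (fun y => Real.sin (s * y) / s) (Real.cos (s * x)) x :=
    (((hasDerivAt_id' x).const_mul s).sin.div_const s).congr_deriv (by field_simp)
  have hcos x : HasDerivAt (fun y => Real.cos (s * y)) (-lam * (Real.sin (s * x) / s)) x :=
    ((hasDerivAt_id' x).const_mul s).cos.congr_deriv (by field_simp; rw [hs2]; ring)
  obtain ⟨hval, hder⟩ := eq_deriv_zero_mul_of_fundamental (fun x => (hsin x).ofReal_comp)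
    (fun x => ((hcos x).ofReal_comp).congr_deriv (by push_cast; ring))
    (by simp) (by simp) hf hode hf0 L
  rw [hfL, eq_comm, mul_eq_zero, or_iff_right hf0', Complex.ofReal_eq_zero,
    div_eq_zero_iff, or_iff_left hs.ne', Real.sin_eq_zero_iff] at hval
  obtain ⟨n, hn⟩ := hval
  have hn0 : 0 < n := by
    have : (0 : ℝ) < n * π := hn ▸ mul_pos hs hL
    exact_mod_cast pos_of_mul_pos_left this pi_pos.le
  lift n to ℕ using hn0.le
  refine ⟨n, by exact_mod_cast hn0, ?_, ?_⟩
  · field_simp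
    push_cast at hn
    linarith
  · push_cast at hn
    rw [hder, ← hn, Real.cos_nat_mul_pi]
    push_cast
    ring

theorem deriv_ne_zero_of_ne_zero {c : ℂ} {f : ℝ → ℂ} (hf : ContDiff ℝ 2 f)
    (hode : ∀ x, deriv (deriv f) x = c * f x) (hf0 : f 0 = 0) (hne : f ≠ 0) : deriv f 0 ≠ 0 :=
  fun h0 => hne <| eq_zero_of_hasDerivAt_hasDerivAt_mul (c := c)
    (fun x => (hasDerivAt_and_hasDerivAt_deriv hf x).1)
    (fun x => hode x ▸ (hasDerivAt_and_hasDerivAt_deriv hf x).2) hf0 h0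

theorem exists_injOn_add_of_finite {α : Type*} [Finite α] (v : ℕ → α) :
    ∃ i n, 0 < n ∧ v (i + n) = v i ∧ Set.InjOn (fun k => v (i + k)) (Set.Iio n) := by
  classical
  have hrep : ∃ j, ∃ i < j, v i = v j := by
    obtain ⟨a, b, hab, hne⟩ := Function.not_injective_iff.mp (not_injective_infinite_finite v)
    rcases hne.lt_or_gt with h | h
    · exact ⟨b, a, h, hab⟩
    · exact ⟨a, b, h, hab.symm⟩
  obtain ⟨i, hi, hv⟩ := Nat.find_spec hrep
  refine ⟨i, Nat.find hrep - i, by omega, by rw [Nat.add_sub_cancel' hi.le, hv], ?_⟩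
  intro a ha b hb hab
  simp only [Set.mem_Iio] at ha hb
  by_contra hne
  rcases lt_or_gt_of_ne hne with h | h
  · exact Nat.find_min hrep (show i + b < Nat.find hrep by omega) ⟨i + a, by omega, hab⟩
  · exact Nat.find_min hrep (show i + a < Nat.find hrep by omega) ⟨i + b, by omega, hab.symm⟩

namespace MetricGraph

variable {G : MetricGraph}

theorem esrc_not (e : G.E) (d : Bool) : G.esrc e (!d) = G.edst e d := by
  cases d <;> rfl

theorem fst_ne_of_walk (p : ℕ → G.E × Bool)
    (hchain : ∀ k, G.edst (p k).1 (p k).2 = G.esrc (p (k + 1)).1 (p (k + 1)).2)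
    (hback : ∀ k, p (k + 1) ≠ ((p k).1, !(p k).2)) {n : ℕ}
    (hinj : Set.InjOn (fun k => G.esrc (p k).1 (p k).2) (Set.Iio n))
    {k l : ℕ} (hkl : k < l) (hl : l < n) : (p k).1 ≠ (p l).1 := by
  intro he
  by_cases hd : (p k).2 = (p l).2
  · exact hkl.ne (hinj (hkl.trans hl) hl (by simp only [he, hd]))
  · have hrev : p l = ((p k).1, !(p k).2) :=
      Prod.ext he.symm (by revert hd; cases (p k).2 <;> cases (p l).2 <;> simp)
    have hsucc : k + 1 = l :=
      hinj (show k + 1 < n by omega) hl (by simp only; rw [← hchain, hrev, esrc_not])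
    exact hback k (hsucc ▸ hrev)

theorem exists_cycle_of_walk (p : ℕ → G.E × Bool)
    (hchain : ∀ k, G.edst (p k).1 (p k).2 = G.esrc (p (k + 1)).1 (p (k + 1)).2)
    (hback : ∀ k, p (k + 1) ≠ ((p k).1, !(p k).2)) {n : ℕ} (hn : 0 < n)
    (hinj : Set.InjOn (fun k => G.esrc (p k).1 (p k).2) (Set.Iio n))
    (hclose : G.esrc (p n).1 (p n).2 = G.esrc (p 0).1 (p 0).2) :
    ∃ c : G.Cycle, ∀ i, ∃ k, c.edge i = (p k).1 := by
  refine ⟨⟨n, hn, fun i => (p i).1, fun i => (p i).2, fun i j hij => ?_,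
    fun i j hij => Fin.ext (hinj i.isLt j.isLt hij), fun i => ?_⟩, fun i => ⟨i, rfl⟩⟩
  · rcases lt_trichotomy i j with h | h | h
    · exact absurd hij (fst_ne_of_walk p hchain hback hinj h j.isLt)
    · exact h
    · exact absurd hij.symm (fst_ne_of_walk p hchain hback hinj h i.isLt)
  · rw [hchain]
    rcases Nat.lt_or_ge (i + 1) n with h | h
    · simp only [Nat.mod_eq_of_lt h]
    · have hi : (i : ℕ) + 1 = n := by omega
      simp only [hi, Nat.mod_self]
      exact hclose

theorem exists_walk {S : Set G.E}
    (H : ∀ e ∈ S, ∀ d, ∃ q : G.E × Bool, q.1 ∈ S ∧ G.esrc q.1 q.2 = G.esrc e d ∧ q ≠ (e, d))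
    {e₀ : G.E} (he₀ : e₀ ∈ S) :
    ∃ p : ℕ → G.E × Bool, (∀ k, (p k).1 ∈ S) ∧
      (∀ k, G.edst (p k).1 (p k).2 = G.esrc (p (k + 1)).1 (p (k + 1)).2) ∧
      ∀ k, p (k + 1) ≠ ((p k).1, !(p k).2) := by
  choose next hnextS hnext_src hnext_ne using
    fun q : {q : G.E × Bool // q.1 ∈ S} => H q.1.1 q.2 (!q.1.2)
  let step : {q : G.E × Bool // q.1 ∈ S} → {q : G.E × Bool // q.1 ∈ S} :=
    fun q => ⟨next q, hnextS q⟩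
  let w : ℕ → {q : G.E × Bool // q.1 ∈ S} := fun k => step^[k] ⟨(e₀, true), he₀⟩
  have hw k : w (k + 1) = step (w k) := Function.iterate_succ_apply' _ _ _
  refine ⟨fun k => (w k).1, fun k => (w k).2, fun k => ?_, fun k => ?_⟩
  · dsimp only
    rw [hw, ← esrc_not]
    exact (hnext_src (w k)).symm
  · dsimp only
    rw [hw]
    exact hnext_ne (w k)

/-- A finite graph in which no vertex has degree one contains a cycle: follow a walk that never
immediately backtracks until it first revisits a vertex. -/
theorem exists_cycle_of_forall_exists_ne {S : Set G.E} (hS : S.Nonempty)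
    (H : ∀ e ∈ S, ∀ d, ∃ q : G.E × Bool, q.1 ∈ S ∧ G.esrc q.1 q.2 = G.esrc e d ∧ q ≠ (e, d)) :
    ∃ c : G.Cycle, c.inSub S := by
  obtain ⟨e₀, he₀⟩ := hS
  obtain ⟨p, hpS, hchain, hback⟩ := exists_walk H he₀
  obtain ⟨i, n, hn, hclose, hinj⟩ := exists_injOn_add_of_finite fun k => G.esrc (p k).1 (p k).2
  obtain ⟨c, hc⟩ := exists_cycle_of_walk (fun k => p (i + k)) (fun k => hchain (i + k))
    (fun k => hback (i + k)) hn hinj hclose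
  refine ⟨c, fun j => ?_⟩
  obtain ⟨k, hk⟩ := hc j
  exact hk ▸ hpS _

theorem commensurate_of_forall_eq_nat_mul {c : G.Cycle} {u : ℝ}
    (hc : ∀ i, ∃ k : ℕ, 0 < k ∧ G.L (c.edge i) = k * u) : G.Commensurate c := by
  intro i j
  obtain ⟨ki, -, hi⟩ := hc i
  obtain ⟨kj, hkj, hj⟩ := hc j
  refine ⟨ki / kj, ?_⟩
  rw [hi, hj]
  push_cast
  field_simp

theorem le_uC_of_forall_eq_nat_mul {c : G.Cycle} {u : ℝ} (hu : 0 < u)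
    (hc : ∀ i, ∃ k : ℕ, 0 < k ∧ G.L (c.edge i) = k * u) : u ≤ G.uC c := by
  refine le_csSup ⟨G.L (c.edge ⟨0, c.npos⟩), fun x ⟨hx, hxL⟩ => ?_⟩ ⟨hu, hc⟩
  obtain ⟨k, hk, hL⟩ := hxL ⟨0, c.npos⟩
  rw [hL]
  exact le_mul_of_one_le_left hx.le (by exact_mod_cast hk)

theorem lamThreshold_le_of_forall_eq_nat_mul {c : G.Cycle} {u : ℝ} (hu : 0 < u)
    (hc : ∀ i, ∃ k : ℕ, 0 < k ∧ G.L (c.edge i) = k * u) :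
    G.lamThreshold ≤ ((π ^ 2 / u ^ 2 : ℝ) : EReal) := by
  unfold lamThreshold
  refine sInf_le_of_le ⟨c, commensurate_of_forall_eq_nat_mul hc, rfl⟩ ?_
  have := le_uC_of_forall_eq_nat_mul hu hc
  exact EReal.coe_le_coe_iff.mpr (by gcongr)

theorem zero_mem_resSet (lam : ℝ) : (0 : G.E → ℝ → ℂ) ∈ G.resSet lam :=
  ⟨⟨⟨fun _ => contDiff_const, fun _ _ => by simp, by simp [ContVert]⟩, fun _ => by
    simp [normDer]⟩, fun _ => ⟨rfl, rfl⟩⟩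

theorem exists_ne_zero_of_isResonance {lam : ℝ} (h : G.IsResonance lam) :
    ∃ f ∈ G.resSet lam, f ≠ 0 := by
  by_contra! hcon
  exact h (Set.eq_singleton_iff_unique_mem.mpr ⟨zero_mem_resSet lam, hcon⟩)

def outDeriv (f : G.E → ℝ → ℂ) (e : G.E) (d : Bool) : ℂ :=
  if d then deriv (f e) 0 else -deriv (f e) (G.L e)

theorem normDer_eq_neg_sum_outDeriv (f : G.E → ℝ → ℂ) (v : G.V) :
    G.normDer f v = -∑ q ∈ Finset.univ.filter (fun q : G.E × Bool => G.esrc q.1 q.2 = v),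
      G.outDeriv f q.1 q.2 := by
  simp only [normDer, Finset.sum_filter, Fintype.sum_prod_type, Fintype.sum_bool]
  rw [← Finset.sum_sub_distrib, ← Finset.sum_neg_distrib]
  refine Finset.sum_congr rfl fun e _ => ?_
  simp only [esrc, outDeriv, if_true, Bool.false_eq_true, if_false]
  split_ifs <;> ring

theorem exists_outDeriv_ne_zero_of_normDer_eq_zero {f : G.E → ℝ → ℂ} {e : G.E} {d : Bool}
    (hv : G.normDer f (G.esrc e d) = 0) (hed : G.outDeriv f e d ≠ 0) :
    ∃ q : G.E × Bool, q ≠ (e, d) ∧ G.esrc q.1 q.2 = G.esrc e d ∧ G.outDeriv f q.1 q.2 ≠ 0 := by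
  by_contra! hcon
  rw [normDer_eq_neg_sum_outDeriv, neg_eq_zero, Finset.sum_eq_single_of_mem (e, d)
    (by simp) fun q hq hne => hcon q hne (Finset.mem_filter.mp hq).2] at hv
  exact hed hv

theorem length_eq_nat_mul_of_mem_resSet {lam : ℝ} {f : G.E → ℝ → ℂ} (hf : f ∈ G.resSet lam)
    {e : G.E} (he : f e ≠ 0) :
    deriv (f e) 0 ≠ 0 ∧ 0 < lam ∧
      ∃ k : ℕ, 0 < k ∧ G.L e = k * (π / √lam) ∧ deriv (f e) (G.L e) = (-1) ^ k * deriv (f e) 0 := by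
  obtain ⟨⟨⟨hsmooth, hode, -⟩, -⟩, hvert⟩ := hf
  have h0 := deriv_ne_zero_of_ne_zero (hsmooth e) (hode e) (hvert e).1 he
  have hpos : 0 < lam := not_le.mp fun hle => h0 <| deriv_eq_zero_of_dirichlet_of_nonpos hle
    (G.L_pos e) (hsmooth e) (hode e) (hvert e).1 (hvert e).2
  exact ⟨h0, hpos, exists_nat_of_dirichlet_of_pos hpos (G.L_pos e) (hsmooth e) (hode e)
    (hvert e).1 (hvert e).2 h0⟩

theorem forall_exists_ne_of_mem_resSet {lam : ℝ} {f : G.E → ℝ → ℂ} (hf : f ∈ G.resSet lam) :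
    ∀ e ∈ {e | f e ≠ 0}, ∀ d, ∃ q : G.E × Bool,
      q.1 ∈ {e | f e ≠ 0} ∧ G.esrc q.1 q.2 = G.esrc e d ∧ q ≠ (e, d) := by
  intro e he d
  have hout : G.outDeriv f e d ≠ 0 := by
    obtain ⟨h0, -, k, -, -, hL⟩ := length_eq_nat_mul_of_mem_resSet hf he
    cases d <;> simp [outDeriv, hL, h0]
  obtain ⟨q, hne, hsrc, hq⟩ := exists_outDeriv_ne_zero_of_normDer_eq_zero (hf.1.2 _) hout
  exact ⟨q, fun hq0 => hq (by simp [outDeriv, hq0]), hsrc, hne⟩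

end MetricGraph

/-- Corollary `cor:soGehtsAuch`: with
`λ_G := inf { π²/u_C² : C a cycle in G with commensurate edges }` (`+∞` if there is no
such cycle), the graph `G` has no resonance in `(−∞, λ_G)`. -/
theorem statement_8 (G : MetricGraph) (lam : ℝ) (hlam : (lam : EReal) < G.lamThreshold) :
    ¬ G.IsResonance lam := by
  intro hres
  obtain ⟨f, hf, hf0⟩ := G.exists_ne_zero_of_isResonance hres
  obtain ⟨e₀, he₀⟩ := Function.ne_iff.mp hf0
  obtain ⟨c, hc⟩ := MetricGraph.exists_cycle_of_forall_exists_ne ⟨e₀, he₀⟩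
    (MetricGraph.forall_exists_ne_of_mem_resSet hf)
  have hpos : 0 < lam := (MetricGraph.length_eq_nat_mul_of_mem_resSet hf he₀).2.1
  have hle := MetricGraph.lamThreshold_le_of_forall_eq_nat_mul (c := c)
    (div_pos pi_pos (Real.sqrt_pos.mpr hpos)) fun i =>
      let ⟨_, _, k, hk, hL, _⟩ := MetricGraph.length_eq_nat_mul_of_mem_resSet hf (hc i)
      ⟨k, hk, hL⟩
  rw [div_pow, sq_sqrt hpos.le, div_div_cancel₀ (by positivity)] at hle
  exact hle.not_gt hlam
end
end
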